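/- Let C ⊂ ℙ^N be an irreducible curve containing the point (1:⋯:1), such that no point of C has two or more zero coordinates (C ∩ Δ_{N−2} = ∅), and suppose there is an s with 2 ≤ s ≤ N such that dim C^{⋆s} ≤ s−1 while dim C^{⋆r} = r for all r ≤ s−1. Then C^{⋆m} = C^{⋆(s−1)} for all m ≥ s−1, hence C^{⋆m} ≠ ℙ^N for all m, and the generic Hadamard-C-rank is infinite. -/

import Mathlib

/-
Each Hadamard power `C^{⋆m}` is irreducible: `C^{⋆(m+1)}` is the image of the irreducible
product `C^{⋆m} × C` under the polynomial map `(p, q) ↦ p ⋆ q`. Since `(1:⋯:1) ∈ C`, we have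
`C^{⋆(s-1)} ⊆ C^{⋆s}`, and the dimension hypotheses make these two irreducible closed sets
equal: a strict inclusion would prolong a maximal chain of `C^{⋆(s-1)}` by one. The closure of
`Y ⋆ C` depends only on the closure of `Y`, so the sequence of Hadamard powers is constant from
`s - 1` on. Their dimension stays at most `s ≤ N`, while the coordinate subspaces form a chain
of length `N + 1` in the whole space.
-/

open MvPolynomial

/-- A polynomial vanishes identically on a set of points of affine space. -/
def vanishesOn {n : ℕ} (f : MvPolynomial (Fin n) ℂ) (S : Set (Fin n → ℂ)) : Prop :=
  ∀ v ∈ S, MvPolynomial.eval v f = 0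

/-- Zariski closure of a set of points: the zero locus of its vanishing ideal. -/
def zclosure {n : ℕ} (S : Set (Fin n → ℂ)) : Set (Fin n → ℂ) :=
  {v | ∀ f : MvPolynomial (Fin n) ℂ, vanishesOn f S → MvPolynomial.eval v f = 0}

/-- Zariski-irreducibility: nonempty and the vanishing ideal is prime. -/
def ZIrred {n : ℕ} (S : Set (Fin n → ℂ)) : Prop :=
  S.Nonempty ∧ ∀ f g : MvPolynomial (Fin n) ℂ,
    vanishesOn (f * g) S → vanishesOn f S ∨ vanishesOn g S

/-- Krull dimension of (the Zariski closure of) a set, as the order-theoretic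
Krull dimension of chains of irreducible Zariski-closed subsets of it. -/
noncomputable def zdim {n : ℕ} (S : Set (Fin n → ℂ)) : WithBot ℕ∞ :=
  Order.krullDim {T : Set (Fin n → ℂ) // zclosure T = T ∧ ZIrred T ∧ T ⊆ zclosure S}

/-- Projective equality of coordinate vectors: equality up to a nonzero scalar. -/
def ProjEq {n : ℕ} (v w : Fin n → ℂ) : Prop :=
  ∃ c : ℂ, c ≠ 0 ∧ w = c • v

/-- The set of (representatives of) Hadamard products of `m` points of `X`. -/
def hprodSet {n : ℕ} (X : Set (Fin n → ℂ)) (m : ℕ) : Set (Fin n → ℂ) :=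
  {p | ∃ f : Fin m → (Fin n → ℂ), (∀ i, f i ∈ X) ∧ ProjEq (∏ i, f i) p}

/-- The `m`-th Hadamard power of `X`: the Zariski closure of the set of Hadamard
products of `m` points of `X`. -/
def hpow {n : ℕ} (X : Set (Fin n → ℂ)) (m : ℕ) : Set (Fin n → ℂ) :=
  zclosure (hprodSet X m)

/-- `p` is an (actual) Hadamard product of `m` points of `X`. -/
def HadDecomp {n : ℕ} (X : Set (Fin n → ℂ)) (m : ℕ) (p : Fin n → ℂ) : Prop :=
  p ∈ hprodSet X m

/-- The Hadamard-`X`-rank of `p` is at most `r` (and finite, in particular). -/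
def HrkLe {n : ℕ} (X : Set (Fin n → ℂ)) (r : ℕ) (p : Fin n → ℂ) : Prop :=
  ∃ m, 1 ≤ m ∧ m ≤ r ∧ HadDecomp X m p

/-- The Hadamard-`X`-rank of `p` is exactly `r`. -/
def HrkEq {n : ℕ} (X : Set (Fin n → ℂ)) (r : ℕ) (p : Fin n → ℂ) : Prop :=
  HadDecomp X r p ∧ ∀ m, 1 ≤ m → m < r → ¬ HadDecomp X m p

/-- The Hadamard-`X`-rank of `p` is finite. -/
def HrkFin {n : ℕ} (X : Set (Fin n → ℂ)) (p : Fin n → ℂ) : Prop :=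
  ∃ m, 1 ≤ m ∧ HadDecomp X m p

/-- `X ⊂ ℙ^{n-1}` is strongly concise: for each coordinate `i` there is a point of `X`
whose `i`-th coordinate vanishes and all other coordinates are nonzero. -/
def StronglyConcise {n : ℕ} (X : Set (Fin n → ℂ)) : Prop :=
  ∀ i : Fin n, ∃ v ∈ X, v i = 0 ∧ ∀ j ≠ i, v j ≠ 0

open Pointwise

theorem MvPolynomial.eval_bind₁ {R σ τ : Type*} [CommSemiring R] (φ : σ → MvPolynomial τ R)
    (p : MvPolynomial σ R) (v : τ → R) :
    eval v (bind₁ φ p) = eval (fun i => eval v (φ i)) p :=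
  eval₂Hom_bind₁ (RingHom.id R) v φ p

theorem Order.coe_add_one_le_krullDim_of_strictMono {α β : Type*} [Preorder α] [Preorder β]
    {f : α → β} (hf : StrictMono f) {b : β} (hb : ∀ a, f a < b) {d : ℕ}
    (hd : d ≤ Order.krullDim α) : ((d + 1 : ℕ) : WithBot ℕ∞) ≤ Order.krullDim β := by
  obtain ⟨l, rfl⟩ := Order.le_krullDim_iff.mp hd
  exact LTSeries.length_le_krullDim ((l.map f hf).snoc b (hb _))

section Zariski

variable {n : ℕ}

theorem subset_zclosure (S : Set (Fin n → ℂ)) : S ⊆ zclosure S :=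
  fun v hv _ hf => hf v hv

theorem vanishesOn_zclosure {f : MvPolynomial (Fin n) ℂ} {S : Set (Fin n → ℂ)}
    (h : vanishesOn f S) : vanishesOn f (zclosure S) :=
  fun _ hv => hv f h

theorem zclosure_minimal {S T : Set (Fin n → ℂ)} (h : S ⊆ zclosure T) :
    zclosure S ⊆ zclosure T :=
  fun _ hv f hf => hv f fun _ hw => h hw f hf

theorem zclosure_mono {S T : Set (Fin n → ℂ)} (h : S ⊆ T) : zclosure S ⊆ zclosure T :=
  zclosure_minimal (h.trans (subset_zclosure T))

theorem zclosure_zclosure (S : Set (Fin n → ℂ)) : zclosure (zclosure S) = zclosure S :=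
  (zclosure_minimal subset_rfl).antisymm (subset_zclosure _)

theorem ZIrred.zclosure {S : Set (Fin n → ℂ)} (h : ZIrred S) : ZIrred (zclosure S) :=
  ⟨h.1.mono (subset_zclosure S), fun f g hfg =>
    (h.2 f g fun v hv => hfg v (subset_zclosure S hv)).imp vanishesOn_zclosure
      vanishesOn_zclosure⟩

theorem zIrred_setOf_eval_ne_zero {h : MvPolynomial (Fin n) ℂ} (hh : h ≠ 0) :
    ZIrred {v | eval v h ≠ 0} := by
  refine ⟨?_, fun f g hfg => ?_⟩
  · by_contra! hempty
    exact hh (MvPolynomial.funext fun v => by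
      simpa using Set.eq_empty_iff_forall_notMem.mp hempty v)
  · have hhfg : h * (f * g) = 0 := MvPolynomial.funext fun v => by
      by_cases hv : eval v h = 0
      · simp [hv]
      · simp [hfg v hv]
    rcases mul_eq_zero.mp ((mul_eq_zero.mp hhfg).resolve_left hh) with hf | hg
    · exact Or.inl fun v _ => by simp [hf]
    · exact Or.inr fun v _ => by simp [hg]

theorem vanishesOn_image_eval_iff {m : ℕ} (φ : Fin n → MvPolynomial (Fin m) ℂ)
    (T : Set (Fin m → ℂ)) (f : MvPolynomial (Fin n) ℂ) :
    vanishesOn f ((fun v j => eval v (φ j)) '' T) ↔ vanishesOn (bind₁ φ f) T := by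
  simp only [vanishesOn, Set.forall_mem_image, eval_bind₁]

theorem ZIrred.image_eval {m : ℕ} {T : Set (Fin m → ℂ)} (hT : ZIrred T)
    (φ : Fin n → MvPolynomial (Fin m) ℂ) : ZIrred ((fun v j => eval v (φ j)) '' T) :=
  ⟨hT.1.image _, fun f g hfg => by
    simp only [vanishesOn_image_eval_iff, map_mul] at hfg ⊢
    exact hT.2 _ _ hfg⟩

end Zariski

section CartesianProducts

variable {a b : ℕ}

theorem eval_bind₁_append_X_C (w : Fin b → ℂ) (f : MvPolynomial (Fin (a + b)) ℂ)
    (u : Fin a → ℂ) :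
    eval u (bind₁ (Fin.append X (fun j => C (w j))) f) = eval (Fin.append u w) f := by
  rw [eval_bind₁]
  congr 2
  funext i
  refine Fin.addCases (fun i => ?_) (fun j => ?_) i <;> simp

theorem eval_bind₁_append_C_X (u : Fin a → ℂ) (f : MvPolynomial (Fin (a + b)) ℂ)
    (w : Fin b → ℂ) :
    eval w (bind₁ (Fin.append (fun i => C (u i)) X) f) = eval (Fin.append u w) f := by
  rw [eval_bind₁]
  congr 2
  funext i
  refine Fin.addCases (fun i => ?_) (fun j => ?_) i <;> simp

theorem ZIrred.image2_append {A : Set (Fin a → ℂ)} {B : Set (Fin b → ℂ)} (hA : ZIrred A)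
    (hB : ZIrred B) : ZIrred (Set.image2 Fin.append A B) := by
  refine ⟨hA.1.image2 hB.1, fun f g hfg => ?_⟩
  simp only [vanishesOn, Set.forall_mem_image2, map_mul, mul_eq_zero] at hfg ⊢
  have hslice : ∀ u ∈ A, (∀ w ∈ B, eval (Fin.append u w) f = 0) ∨
      ∀ w ∈ B, eval (Fin.append u w) g = 0 := fun u hu => by
    simpa only [vanishesOn, eval_bind₁_append_C_X] using
      hB.2 (bind₁ (Fin.append (fun i => C (u i)) X) f)
        (bind₁ (Fin.append (fun i => C (u i)) X) g) fun w hw => by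
        simpa only [map_mul, mul_eq_zero, eval_bind₁_append_C_X] using hfg u hu w hw
  by_contra! h
  obtain ⟨⟨u₁, hu₁, w₁, hw₁, hf⟩, u₂, hu₂, w₂, hw₂, hg⟩ := h
  rcases hA.2 (bind₁ (Fin.append X (fun j => C (w₁ j))) f)
      (bind₁ (Fin.append X (fun j => C (w₂ j))) g) fun u hu => by
        simp only [map_mul, mul_eq_zero, eval_bind₁_append_X_C]
        exact (hslice u hu).imp (· w₁ hw₁) (· w₂ hw₂) with h | h
  · exact hf (by simpa only [eval_bind₁_append_X_C] using h u₁ hu₁)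
  · exact hg (by simpa only [eval_bind₁_append_X_C] using h u₂ hu₂)

end CartesianProducts

section HadamardProducts

variable {n : ℕ}

theorem ZIrred.mul {A B : Set (Fin n → ℂ)} (hA : ZIrred A) (hB : ZIrred B) :
    ZIrred (A * B) := by
  have hmul : A * B = (fun v j => eval v (X (Fin.castAdd n j) * X (Fin.natAdd n j))) ''
      Set.image2 Fin.append A B := by
    rw [Set.image_image2, ← Set.image2_mul]
    congr
    funext u w j
    simp only [map_mul, eval_X, Fin.append_left, Fin.append_right, Pi.mul_apply]
  rw [hmul]
  exact (hA.image2_append hB).image_eval _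

theorem mul_mem_hprodSet_succ {S : Set (Fin n → ℂ)} {m : ℕ} {q w : Fin n → ℂ}
    (hq : q ∈ hprodSet S m) (hw : w ∈ S) : q * w ∈ hprodSet S (m + 1) := by
  obtain ⟨t, ht, c, hc, rfl⟩ := hq
  refine ⟨Fin.snoc t w, Fin.lastCases (by simpa) (by simpa), c, hc, ?_⟩
  rw [Fin.prod_univ_castSucc]
  simp

theorem hprodSet_succ (S : Set (Fin n → ℂ)) (m : ℕ) :
    hprodSet S (m + 1) = hprodSet S m * S := by
  refine Set.Subset.antisymm ?_
    fun _ ⟨q, hq, w, hw, hqw⟩ => hqw ▸ mul_mem_hprodSet_succ hq hw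
  rintro _ ⟨t, ht, c, hc, rfl⟩
  refine ⟨c • ∏ i : Fin m, t i.castSucc, ⟨_, fun i => ht _, c, hc, rfl⟩, t (Fin.last m), ht _,
    ?_⟩
  rw [Fin.prod_univ_castSucc]
  exact smul_mul_assoc _ _ _

theorem zIrred_hprodSet_zero (S : Set (Fin n → ℂ)) : ZIrred (hprodSet S 0) := by
  have hzero : hprodSet S 0 =
      (fun v (_ : Fin n) => eval v (X 0)) '' {v : Fin 1 → ℂ | eval v (X 0) ≠ 0} := by
    ext p
    constructor
    · rintro ⟨-, -, c, hc, rfl⟩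
      exact ⟨fun _ => c, by simpa using hc, by ext; simp⟩
    · rintro ⟨v, hv, rfl⟩
      exact ⟨Fin.elim0, fun i => i.elim0, v 0, by simpa using hv, by ext; simp⟩
  rw [hzero]
  exact (zIrred_setOf_eval_ne_zero (X_ne_zero 0)).image_eval _

theorem zIrred_hpow {S : Set (Fin n → ℂ)} (hS : ZIrred S) (m : ℕ) : ZIrred (hpow S m) := by
  refine ZIrred.zclosure ?_
  induction m with
  | zero => exact zIrred_hprodSet_zero S
  | succ m ih => exact hprodSet_succ S m ▸ ih.mul hS

end HadamardProducts

section Stabilization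

variable {n : ℕ}

theorem zclosure_zclosure_mul (A B : Set (Fin n → ℂ)) :
    zclosure (zclosure A * B) = zclosure (A * B) := by
  refine (zclosure_minimal ?_).antisymm (zclosure_mono (Set.mul_subset_mul_right
    (subset_zclosure A)))
  rintro _ ⟨v, hv, w, hw, rfl⟩ f hf
  -- `f(· ⋆ w)` is a polynomial vanishing on `A`, hence on its closure
  have hfw : vanishesOn (bind₁ (fun j => X j * C (w j)) f) A := fun u hu => by
    simpa [eval_bind₁, Pi.mul_def] using hf _ (Set.mul_mem_mul hu hw)
  simpa [eval_bind₁, Pi.mul_def] using hv _ hfw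

theorem hpow_succ_congr {S : Set (Fin n → ℂ)} {m m' : ℕ} (h : hpow S m = hpow S m') :
    hpow S (m + 1) = hpow S (m' + 1) := by
  simp only [hpow, hprodSet_succ] at h ⊢
  rw [← zclosure_zclosure_mul, h, zclosure_zclosure_mul]

theorem hpow_eq_of_succ_eq {S : Set (Fin n → ℂ)} {k : ℕ} (h : hpow S (k + 1) = hpow S k) :
    ∀ m, k ≤ m → hpow S m = hpow S k := by
  intro m hm
  induction m, hm using Nat.le_induction with
  | base => rfl
  | succ m _ ih => exact (hpow_succ_congr ih).trans h

theorem hpow_subset_succ {S : Set (Fin n → ℂ)} (hone : (fun _ => (1 : ℂ)) ∈ S) (m : ℕ) :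
    hpow S m ⊆ hpow S (m + 1) :=
  zclosure_mono fun q hq => mul_one q ▸ mul_mem_hprodSet_succ hq hone

end Stabilization

section Dimension

variable {n : ℕ}

theorem eq_of_subset_of_zdim_le {A B : Set (Fin n → ℂ)} (hA : zclosure A = A)
    (hB : zclosure B = B) (hBirr : ZIrred B) (hAB : A ⊆ B) {d : ℕ}
    (hdA : (d : WithBot ℕ∞) ≤ zdim A) (hdB : zdim B ≤ (d : WithBot ℕ∞)) : A = B := by
  by_contra hne
  have hlt : ((d + 1 : ℕ) : WithBot ℕ∞) ≤ zdim B :=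
    Order.coe_add_one_le_krullDim_of_strictMono
      (f := fun T => ⟨T.1, T.2.1, T.2.2.1,
        T.2.2.2.trans (hA.subset.trans (hAB.trans (subset_zclosure B)))⟩)
      (fun _ _ h => h) (b := ⟨B, hB, hBirr, subset_zclosure B⟩)
      (fun T => (T.2.2.2.trans hA.subset).trans_ssubset (hAB.ssubset_of_ne hne)) hdA
  exact absurd (hlt.trans hdB) (by norm_cast; omega)

def coordSubspace (n k : ℕ) : Set (Fin n → ℂ) := {v | ∀ j : Fin n, k ≤ j → v j = 0}

theorem zclosure_coordSubspace (k : ℕ) : zclosure (coordSubspace n k) = coordSubspace n k :=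
  Set.Subset.antisymm
    (fun v hv j hj => by simpa using hv (X j) fun w hw => by simpa using hw j hj)
    (subset_zclosure _)

theorem zIrred_coordSubspace (k : ℕ) : ZIrred (coordSubspace n k) := by
  have himage : coordSubspace n k =
      (fun v (j : Fin n) => eval v (if (j : ℕ) < k then X j else 0)) '' {v | eval v 1 ≠ 0} := by
    ext v
    constructor
    · intro hv
      refine ⟨v, by simp, funext fun j => ?_⟩
      dsimp only
      split_ifs with hj
      · simp
      · simp [hv j (not_lt.mp hj)]
    · rintro ⟨u, -, rfl⟩ j hj
      simp [not_lt.mpr hj]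
  rw [himage]
  exact (zIrred_setOf_eval_ne_zero one_ne_zero).image_eval _

theorem coordSubspace_ssubset_coordSubspace {k k' : ℕ} (hkk' : k < k') (hk : k < n) :
    coordSubspace n k ⊂ coordSubspace n k' := by
  refine Set.ssubset_iff_subset_ne.mpr
    ⟨fun v hv j hj => hv j (hkk'.le.trans hj), fun heq => ?_⟩
  have hmem : Pi.single (⟨k, hk⟩ : Fin n) (1 : ℂ) ∈ coordSubspace n k' := fun j hj =>
    Pi.single_eq_of_ne (by rintro rfl; exact (hkk'.trans_le hj).false) _
  have hmem' : Pi.single (⟨k, hk⟩ : Fin n) (1 : ℂ) ∈ coordSubspace n k := heq ▸ hmem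
  simpa using hmem' ⟨k, hk⟩ le_rfl

theorem le_zdim_univ (n : ℕ) : (n : WithBot ℕ∞) ≤ zdim (Set.univ : Set (Fin n → ℂ)) := by
  let L : Fin (n + 1) →
      {T : Set (Fin n → ℂ) // zclosure T = T ∧ ZIrred T ∧ T ⊆ zclosure Set.univ} :=
    fun k => ⟨coordSubspace n k, zclosure_coordSubspace k, zIrred_coordSubspace k,
      (Set.subset_univ _).trans (subset_zclosure _)⟩
  have hL : StrictMono L := fun k k' hkk' =>
    coordSubspace_ssubset_coordSubspace (Fin.lt_def.mp hkk') (by omega)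
  exact Order.LTSeries.length_le_krullDim (LTSeries.mk n L hL)

theorem ne_univ_of_zdim_lt {S : Set (Fin n → ℂ)} (h : zdim S < n) : S ≠ Set.univ :=
  fun hS => (le_zdim_univ n).not_gt (hS ▸ h)

end Dimension

theorem stmt15_general (N : ℕ) (C : Set (Fin (N + 1) → ℂ)) (hirr : ZIrred C)
    (hone : (fun _ => (1 : ℂ)) ∈ C)
    (s : ℕ) (hs2 : 2 ≤ s) (hsN : s ≤ N)
    (hdrop : zdim (hpow C s) ≤ (s : ℕ))
    (hgrow : ∀ r, 1 ≤ r → r ≤ s - 1 → zdim (hpow C r) = (r + 1 : ℕ)) :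
    (∀ m, s - 1 ≤ m → hpow C m = hpow C (s - 1)) ∧
    ∀ m, 1 ≤ m → hpow C m ≠ Set.univ := by
  obtain ⟨k, rfl⟩ : ∃ k, s = k + 1 := ⟨s - 1, by omega⟩
  simp only [Nat.add_sub_cancel] at hgrow ⊢
  have hstable : hpow C (k + 1) = hpow C k :=
    (eq_of_subset_of_zdim_le (zclosure_zclosure _) (zclosure_zclosure _) (zIrred_hpow hirr _)
      (hpow_subset_succ hone k) (hgrow k (by omega) le_rfl).ge hdrop).symm
  refine ⟨hpow_eq_of_succ_eq hstable, fun m hm => ne_univ_of_zdim_lt ?_⟩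
  have hdim : zdim (hpow C m) ≤ (k + 1 : ℕ) := by
    rcases le_or_gt m k with hmk | hkm
    · rw [hgrow m hm hmk]
      exact_mod_cast Nat.succ_le_succ hmk
    · rw [hpow_eq_of_succ_eq hstable m hkm.le, hgrow k (by omega) le_rfl]
  exact hdim.trans_lt (by exact_mod_cast Nat.succ_lt_succ hsN)

/-- let `C ⊂ ℙ^N` be an irreducible curve (affine cone of dimension 2)
through `(1:⋯:1)` with no point having two zero coordinates. If for some `2 ≤ s ≤ N` the
Hadamard powers stop growing at step `s` (projective dimensions: `dim C^{⋆s} ≤ s−1` while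
`dim C^{⋆r} = r` for `r ≤ s−1`), then `C^{⋆m} = C^{⋆(s−1)}` for all `m ≥ s−1`, no
Hadamard power fills `ℙ^N`, and the generic Hadamard-`C`-rank is infinite. -/
theorem stmt15 (N : ℕ) (C : Set (Fin (N + 1) → ℂ)) (hirr : ZIrred C)
    (hone : (fun _ => (1 : ℂ)) ∈ C)
    (hΔ : ∀ v ∈ C, Nat.card {i : Fin (N + 1) // v i = 0} ≤ 1)
    (hdim : zdim C = (2 : ℕ))
    (s : ℕ) (hs2 : 2 ≤ s) (hsN : s ≤ N)
    (hdrop : zdim (hpow C s) ≤ (s : ℕ))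
    (hgrow : ∀ r, 1 ≤ r → r ≤ s - 1 → zdim (hpow C r) = (r + 1 : ℕ)) :
    (∀ m, s - 1 ≤ m → hpow C m = hpow C (s - 1)) ∧
    ∀ m, 1 ≤ m → hpow C m ≠ Set.univ :=
  stmt15_general N C hirr hone s hs2 hsN hdrop hgrow
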